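/- Let H be the strong product P₄ ⊠ P₂. Then Υ(H) = 2, but Υ(H ∨ H) ≤ 3 < Υ(H) + Υ(H), showing the inequality Υ(G ∨ J) ≤ Υ(G) + Υ(J) can be strict. -/

import Mathlib

open SimpleGraph

/-- The join of two graphs on disjoint vertex sets. -/
def SimpleGraph.join {V W : Type*} (G : SimpleGraph V) (J : SimpleGraph W) :
    SimpleGraph (V ⊕ W) where
  Adj x y :=
    match x, y with
    | Sum.inl a, Sum.inl b => G.Adj a b
    | Sum.inr a, Sum.inr b => J.Adj a b
    | Sum.inl _, Sum.inr _ => True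
    | Sum.inr _, Sum.inl _ => True
  symm := ⟨by
    rintro (a | a) (b | b) h
    · exact G.adj_symm h
    · trivial
    · trivial
    · exact J.adj_symm h⟩
  loopless := ⟨by
    rintro (a | a) h
    · exact G.ne_of_adj h rfl
    · exact J.ne_of_adj h rfl⟩

/-- The common neighbourhood of a set of vertices. -/
def SimpleGraph.commonNbhd {V : Type*} (G : SimpleGraph V) (S : Set V) : Set V :=
  {x | ∀ v ∈ S, G.Adj v x}

/-- A small common neighbourhood set. -/
def SimpleGraph.IsSCN {V : Type*} (G : SimpleGraph V) (S : Set V) : Prop :=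
  S.Nonempty ∧ (G.commonNbhd S).ncard ≤ S.ncard

/-- `Υ(G)`: the minimum cardinality of a small common neighbourhood set. -/
noncomputable def SimpleGraph.upsilon {V : Type*} (G : SimpleGraph V) : ℕ :=
  sInf {n | ∃ S : Set V, G.IsSCN S ∧ S.ncard = n}

/-- The strong product of two simple graphs. -/
def SimpleGraph.strongProd {α β : Type*} (G : SimpleGraph α) (H : SimpleGraph β) :
    SimpleGraph (α × β) where
  Adj x y := x ≠ y ∧ (x.1 = y.1 ∨ G.Adj x.1 y.1) ∧ (x.2 = y.2 ∨ H.Adj x.2 y.2)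
  symm := ⟨by
    rintro x y ⟨h1, h2, h3⟩
    exact ⟨h1.symm, h2.imp Eq.symm (fun h => h.symm), h3.imp Eq.symm (fun h => h.symm)⟩⟩
  loopless := ⟨fun x h => h.1 rfl⟩

/-!
Every vertex of `P₄ ⊠ P₂` has at least two neighbours, so no single vertex has a small common
neighbourhood, while the two far ends `(0,0)` and `(3,0)` have no common neighbour at all; hence
`Υ = 2`. In a join the common neighbourhood of a set splits along the two sides, so both ends in
one copy together with a corner, which has three neighbours, in the other copy form a set of size
three with three common neighbours.
-/

namespace SimpleGraph

section Upsilon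

variable {V W : Type*} {G : SimpleGraph V} {J : SimpleGraph W}

@[simp]
lemma commonNbhd_singleton (v : V) : G.commonNbhd {v} = G.neighborSet v := by
  ext x
  simp [commonNbhd]

lemma commonNbhd_pair (u v : V) :
    G.commonNbhd {u, v} = G.neighborSet u ∩ G.neighborSet v := by
  ext x
  simp [commonNbhd]

lemma upsilon_le_ncard {S : Set V} (hS : G.IsSCN S) : G.upsilon ≤ S.ncard :=
  Nat.sInf_le ⟨S, hS, rfl⟩

lemma le_upsilon {S : Set V} (hS : G.IsSCN S) {k : ℕ}
    (h : ∀ T : Set V, G.IsSCN T → k ≤ T.ncard) : k ≤ G.upsilon :=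
  le_csInf ⟨_, S, hS, rfl⟩ fun _ ⟨T, hT, hn⟩ => hn ▸ h T hT

lemma two_le_ncard_of_isSCN [Finite V] (hdeg : ∀ v, ∃ a b, a ≠ b ∧ G.Adj v a ∧ G.Adj v b)
    {S : Set V} (hS : G.IsSCN S) : 2 ≤ S.ncard := by
  by_contra! hlt
  obtain hempty | ⟨v, rfl⟩ := (Set.ncard_le_one_iff_eq).mp (Nat.le_of_lt_succ hlt)
  · exact hS.1.ne_empty hempty
  · obtain ⟨a, b, hab, ha, hb⟩ := hdeg v
    have : 1 < (G.neighborSet v).ncard := (Set.one_lt_ncard_iff).mpr ⟨a, b, ha, hb, hab⟩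
    have := hS.2
    simp only [commonNbhd_singleton, Set.ncard_singleton] at this
    omega

lemma commonNbhd_join (A : Set V) (B : Set W) :
    (G.join J).commonNbhd (Sum.inl '' A ∪ Sum.inr '' B) =
      Sum.inl '' G.commonNbhd A ∪ Sum.inr '' J.commonNbhd B := by
  ext (x | x) <;> simp [commonNbhd, join]

lemma ncard_inl_image_union_inr_image [Finite V] [Finite W] (A : Set V) (B : Set W) :
    (Sum.inl '' A ∪ Sum.inr '' B : Set (V ⊕ W)).ncard = A.ncard + B.ncard := by
  rw [Set.ncard_union_eq (Set.disjoint_left.mpr (by simp)),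
    Set.ncard_image_of_injective _ Sum.inl_injective,
    Set.ncard_image_of_injective _ Sum.inr_injective]

lemma upsilon_join_le [Finite V] [Finite W] {A : Set V} {B : Set W} (hA : A.Nonempty)
    (h : (G.commonNbhd A).ncard + (J.commonNbhd B).ncard ≤ A.ncard + B.ncard) :
    (G.join J).upsilon ≤ A.ncard + B.ncard := by
  rw [← ncard_inl_image_union_inr_image]
  refine upsilon_le_ncard ⟨(hA.image _).mono Set.subset_union_left, ?_⟩
  rwa [commonNbhd_join, ncard_inl_image_union_inr_image, ncard_inl_image_union_inr_image]

end Upsilon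

instance decidableAdjPathGraph (n : ℕ) : DecidableRel (pathGraph n).Adj := fun _ _ =>
  decidable_of_iff _ pathGraph_adj.symm

instance decidableAdjStrongProd {α β : Type*} [DecidableEq α] [DecidableEq β]
    (G : SimpleGraph α) (H : SimpleGraph β) [DecidableRel G.Adj] [DecidableRel H.Adj] :
    DecidableRel (G.strongProd H).Adj := fun x y =>
  inferInstanceAs (Decidable (x ≠ y ∧ (x.1 = y.1 ∨ G.Adj x.1 y.1) ∧ (x.2 = y.2 ∨ H.Adj x.2 y.2)))

abbrev kingGraph4x2 : SimpleGraph (Fin 4 × Fin 2) := (pathGraph 4).strongProd (pathGraph 2)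

lemma kingGraph4x2_exists_two_nbrs :
    ∀ v, ∃ a b, a ≠ b ∧ kingGraph4x2.Adj v a ∧ kingGraph4x2.Adj v b := by
  decide

lemma kingGraph4x2_commonNbhd_ends : kingGraph4x2.commonNbhd {(0, 0), (3, 0)} = ∅ := by
  ext ⟨i, j⟩
  simp only [commonNbhd_pair, Set.mem_inter_iff, mem_neighborSet, Set.mem_empty_iff_false,
    iff_false]
  revert i j
  decide

lemma kingGraph4x2_ncard_ends : ({(0, 0), (3, 0)} : Set (Fin 4 × Fin 2)).ncard = 2 :=
  Set.ncard_pair (by decide)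

lemma kingGraph4x2_ncard_neighborSet_corner : (kingGraph4x2.neighborSet (0, 0)).ncard = 3 := by
  rw [Set.ncard_eq_toFinset_card']
  decide

lemma kingGraph4x2_isSCN_ends : kingGraph4x2.IsSCN {(0, 0), (3, 0)} :=
  ⟨Set.insert_nonempty _ _, by simp [kingGraph4x2_commonNbhd_ends]⟩

lemma kingGraph4x2_upsilon : kingGraph4x2.upsilon = 2 :=
  le_antisymm ((upsilon_le_ncard kingGraph4x2_isSCN_ends).trans_eq kingGraph4x2_ncard_ends)
    (le_upsilon kingGraph4x2_isSCN_ends fun _ => two_le_ncard_of_isSCN kingGraph4x2_exists_two_nbrs)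

lemma join_kingGraph4x2_upsilon_le : (kingGraph4x2.join kingGraph4x2).upsilon ≤ 3 := by
  have h := upsilon_join_le (G := kingGraph4x2) (J := kingGraph4x2) (A := {(0, 0), (3, 0)})
    (B := {(0, 0)}) (Set.insert_nonempty _ _)
    (by rw [kingGraph4x2_commonNbhd_ends, commonNbhd_singleton, kingGraph4x2_ncard_ends,
      kingGraph4x2_ncard_neighborSet_corner, Set.ncard_empty, Set.ncard_singleton])
  rwa [kingGraph4x2_ncard_ends, Set.ncard_singleton] at h

end SimpleGraph

theorem stmt19 :
    ((pathGraph 4).strongProd (pathGraph 2)).upsilon = 2 ∧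
    (((pathGraph 4).strongProd (pathGraph 2)).join
        ((pathGraph 4).strongProd (pathGraph 2))).upsilon ≤ 3 ∧
    3 < ((pathGraph 4).strongProd (pathGraph 2)).upsilon +
        ((pathGraph 4).strongProd (pathGraph 2)).upsilon := by
  refine ⟨kingGraph4x2_upsilon, join_kingGraph4x2_upsilon_le, ?_⟩
  rw [kingGraph4x2_upsilon]
  norm_num
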